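/- Let n ≥ 2 be an integer and A an LM_n-algebra. Then an LM_n-congruence on A is Boolean if and only if it is principal; that is, the Boolean congruences and the principal congruences on A coincide. -/
import Mathlib


/-- An LM_θ-algebra over a linearly ordered index set `I`:
a bounded distributive lattice with operations `phi i` and `phibar i`. -/
structure LMAlg (I A : Type*) [LinearOrder I] [DistribLattice A] [BoundedOrder A] where
  phi : I → A → A
  phibar : I → A → A
  phi_sup : ∀ i x y, phi i (x ⊔ y) = phi i x ⊔ phi i y
  phi_inf : ∀ i x y, phi i (x ⊓ y) = phi i x ⊓ phi i y
  phi_bot : ∀ i, phi i ⊥ = ⊥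
  phi_top : ∀ i, phi i ⊤ = ⊤
  sup_phibar : ∀ i x, phi i x ⊔ phibar i x = ⊤
  inf_phibar : ∀ i x, phi i x ⊓ phibar i x = ⊥
  phi_phi : ∀ i j x, phi i (phi j x) = phi j x
  phi_mono : ∀ ⦃i j : I⦄, i ≤ j → ∀ x, phi i x ≤ phi j x
  determined : ∀ x y, (∀ i, phi i x = phi i y) → x = y

/-- A prime filter of a bounded distributive lattice. -/
structure PrimeFilter (A : Type*) [DistribLattice A] [BoundedOrder A] where
  carrier : Set A
  top_mem : ⊤ ∈ carrier
  bot_notMem : ⊥ ∉ carrier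
  mem_of_le : ∀ {a b : A}, a ∈ carrier → a ≤ b → b ∈ carrier
  inf_mem : ∀ {a b : A}, a ∈ carrier → b ∈ carrier → a ⊓ b ∈ carrier
  prime : ∀ {a b : A}, a ⊔ b ∈ carrier → a ∈ carrier ∨ b ∈ carrier

variable {I A : Type*} [LinearOrder I] [DistribLattice A] [BoundedOrder A]

/-- Prime filters ordered by inclusion. -/
instance : PartialOrder (PrimeFilter A) where
  le P Q := P.carrier ⊆ Q.carrier
  le_refl _ _ hx := hx
  le_trans _ _ _ h1 h2 _ hx := h2 (h1 hx)
  le_antisymm P Q h1 h2 := by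
    cases P; cases Q
    simp only [PrimeFilter.mk.injEq]
    exact subset_antisymm h1 h2

/-- The map `σ_A`. -/
def sigmaA (a : A) : Set (PrimeFilter A) := {P | a ∈ P.carrier}

/-- The Priestley topology on the set of prime filters, with sub-basis the sets
`σ_A a` and their complements. -/
instance : TopologicalSpace (PrimeFilter A) :=
  TopologicalSpace.generateFrom
    (Set.range (sigmaA (A := A)) ∪ Set.range (fun a : A => (sigmaA a)ᶜ))

/-- The map `f_i^A (P) = φ_i⁻¹(P)` on prime filters. -/
def LMAlg.fA (L : LMAlg I A) (i : I) (P : PrimeFilter A) : PrimeFilter A where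
  carrier := L.phi i ⁻¹' P.carrier
  top_mem := by simp only [Set.mem_preimage, L.phi_top]; exact P.top_mem
  bot_notMem := by simp only [Set.mem_preimage, L.phi_bot]; exact P.bot_notMem
  mem_of_le := by
    intro a b ha hab
    have h1 : L.phi i b = L.phi i a ⊔ L.phi i b := by
      rw [← L.phi_sup, sup_eq_right.mpr hab]
    exact P.mem_of_le ha (le_sup_left.trans_eq h1.symm)
  inf_mem := by
    intro a b ha hb
    simp only [Set.mem_preimage, L.phi_inf]
    exact P.inf_mem ha hb
  prime := by
    intro a b h
    simp only [Set.mem_preimage, L.phi_sup] at h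
    exact P.prime h

/-- An LM_θ-congruence: a bounded-lattice congruence compatible with all `phi i`, `phibar i`. -/
structure IsLMCongr (L : LMAlg I A) (r : A → A → Prop) : Prop where
  refl : ∀ x, r x x
  symm : ∀ {x y}, r x y → r y x
  trans : ∀ {x y z}, r x y → r y z → r x z
  sup_congr : ∀ {x y u v}, r x y → r u v → r (x ⊔ u) (y ⊔ v)
  inf_congr : ∀ {x y u v}, r x y → r u v → r (x ⊓ u) (y ⊓ v)
  phi_congr : ∀ (i : I) {x y}, r x y → r (L.phi i x) (L.phi i y)
  phibar_congr : ∀ (i : I) {x y}, r x y → r (L.phibar i x) (L.phibar i y)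

/-- A θ-congruence: a lattice congruence `r` with `r x y ↔ ∀ i, r (φ_i x) (φ_i y)`. -/
structure IsThetaCongr (L : LMAlg I A) (r : A → A → Prop) : Prop where
  refl : ∀ x, r x x
  symm : ∀ {x y}, r x y → r y x
  trans : ∀ {x y z}, r x y → r y z → r x z
  sup_congr : ∀ {x y u v}, r x y → r u v → r (x ⊔ u) (y ⊔ v)
  inf_congr : ∀ {x y u v}, r x y → r u v → r (x ⊓ u) (y ⊓ v)
  theta : ∀ x y, r x y ↔ ∀ i : I, r (L.phi i x) (L.phi i y)

/-- `Y` is semimodal if `f i '' Y ⊆ Y` for all `i`. -/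
def Semimodal {I X : Type*} (f : I → X → X) (Y : Set X) : Prop := ∀ i, f i '' Y ⊆ Y

/-- `Y` is modal if `f i ⁻¹' Y = Y` for all `i`. -/
def Modal {I X : Type*} (f : I → X → X) (Y : Set X) : Prop := ∀ i, f i ⁻¹' Y = Y

/-- `Y` is a θ-subset if `⋃ i, f i '' Y ⊆ Y ⊆ closure (⋃ i, f i '' Y)`. -/
def ThetaSubset {I X : Type*} [TopologicalSpace X] (f : I → X → X) (Y : Set X) : Prop :=
  (⋃ i, f i '' Y) ⊆ Y ∧ Y ⊆ closure (⋃ i, f i '' Y)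

/-- The relation `Θ` determined by an (open) subset `G` of the dual space:
`(a,b) ∈ Θ(G)` iff `σ_A a △ σ_A b ⊆ G`. -/
def thetaO (G : Set (PrimeFilter A)) : A → A → Prop :=
  fun a b => symmDiff (sigmaA a) (sigmaA b) ⊆ G

/-- `r` is the principal LM_θ-congruence generated by `(a,b)`. -/
def IsPrincipalLMCongrOn (L : LMAlg I A) (r : A → A → Prop) (a b : A) : Prop :=
  IsLMCongr L r ∧ r a b ∧ ∀ s, IsLMCongr L s → s a b → ∀ x y, r x y → s x y

/-- `r` is the principal θ-congruence generated by `(a,b)`. -/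
def IsPrincipalThetaCongrOn (L : LMAlg I A) (r : A → A → Prop) (a b : A) : Prop :=
  IsThetaCongr L r ∧ r a b ∧ ∀ s, IsThetaCongr L s → s a b → ∀ x y, r x y → s x y

/-- `r` is a principal LM_θ-congruence. -/
def IsPrincipalLMCongr (L : LMAlg I A) (r : A → A → Prop) : Prop :=
  ∃ a b, IsPrincipalLMCongrOn L r a b

/-- `r` is a principal θ-congruence. -/
def IsPrincipalThetaCongr (L : LMAlg I A) (r : A → A → Prop) : Prop :=
  ∃ a b, IsPrincipalThetaCongrOn L r a b

/-- `r` is a Boolean LM_θ-congruence: a complemented element of the lattice of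
LM_θ-congruences ordered by inclusion (the bottom element is equality and the
join of `r` and its complement, i.e. the least congruence containing both, is
the total relation). -/
def IsBooleanLMCongr (L : LMAlg I A) (r : A → A → Prop) : Prop :=
  IsLMCongr L r ∧ ∃ s, IsLMCongr L s ∧
    (∀ x y, (r x y ∧ s x y) ↔ x = y) ∧
    (∀ t, IsLMCongr L t → (∀ x y, r x y → t x y) → (∀ x y, s x y → t x y) → ∀ x y, t x y)


section AuxLM

variable {I A : Type*} [LinearOrder I] [DistribLattice A] [BoundedOrder A] (L : LMAlg I A)

lemma LMAlg.isCompl_phi (i : I) (x : A) : IsCompl (L.phi i x) (L.phibar i x) :=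
  ⟨disjoint_iff.mpr (L.inf_phibar i x), codisjoint_iff.mpr (L.sup_phibar i x)⟩

/-- Relative complements agree on a common meet. -/
lemma relcompl_aux {u u' v v' e : A} (hu : IsCompl u u') (hv : IsCompl v v')
    (h : u ⊓ e = v ⊓ e) : u' ⊓ e = u' ⊓ v' ⊓ e := by
  calc u' ⊓ e = u' ⊓ (⊤ ⊓ e) := by rw [top_inf_eq]
    _ = u' ⊓ ((v ⊔ v') ⊓ e) := by rw [hv.sup_eq_top]
    _ = u' ⊓ ((v ⊓ e) ⊔ (v' ⊓ e)) := by rw [inf_sup_right]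
    _ = (u' ⊓ (u ⊓ e)) ⊔ (u' ⊓ (v' ⊓ e)) := by rw [inf_sup_left, h]
    _ = u' ⊓ v' ⊓ e := by
        rw [← inf_assoc, inf_comm u' u, hu.inf_eq_bot, bot_inf_eq, bot_sup_eq, ← inf_assoc]

lemma relcompl {u u' v v' e : A} (hu : IsCompl u u') (hv : IsCompl v v')
    (h : u ⊓ e = v ⊓ e) : u' ⊓ e = v' ⊓ e := by
  rw [relcompl_aux hu hv h, relcompl_aux hv hu h.symm, inf_comm v' u']

lemma lmComplUnique {u v w : A} (h1 : IsCompl u v) (h2 : IsCompl u w) : v = w := by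
  have := relcompl h1 h2 (rfl : u ⊓ (⊤ : A) = u ⊓ ⊤)
  simpa using this

lemma LMAlg.phi_phibar (j i : I) (x : A) : L.phi j (L.phibar i x) = L.phibar i x := by
  refine lmComplUnique ?_ (L.isCompl_phi i x)
  constructor
  · rw [disjoint_iff]
    conv_lhs => rw [← L.phi_phi j i x]
    rw [← L.phi_inf, L.inf_phibar, L.phi_bot]
  · rw [codisjoint_iff]
    conv_lhs => rw [← L.phi_phi j i x]
    rw [← L.phi_sup, L.sup_phibar, L.phi_top]

lemma LMAlg.phi_of_compl {c c' : A} (hc : ∀ i, L.phi i c = c) (h : IsCompl c c') (j : I) :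
    L.phi j c' = c' := by
  refine lmComplUnique ?_ h
  constructor
  · rw [disjoint_iff]
    conv_lhs => rw [← hc j]
    rw [← L.phi_inf, h.inf_eq_bot, L.phi_bot]
  · rw [codisjoint_iff]
    conv_lhs => rw [← hc j]
    rw [← L.phi_sup, h.sup_eq_top, L.phi_top]

lemma LMAlg.phi_finsetInf {ι : Type*} (j : I) (s : Finset ι) (f : ι → A) :
    L.phi j (s.inf f) = s.inf fun i => L.phi j (f i) := by
  classical
  induction s using Finset.cons_induction with
  | empty => simpa using L.phi_top j
  | cons i s hi ih => simp [Finset.inf_cons, L.phi_inf, ih]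

/-- The central element `d(a,b)`. -/
def LMAlg.dd [Fintype I] (a b : A) : A :=
  Finset.univ.inf fun i => (L.phi i a ⊓ L.phi i b) ⊔ (L.phibar i a ⊓ L.phibar i b)

lemma LMAlg.phi_dd [Fintype I] (j : I) (a b : A) : L.phi j (L.dd a b) = L.dd a b := by
  rw [LMAlg.dd, L.phi_finsetInf]
  refine Finset.inf_congr rfl fun i _ => ?_
  rw [L.phi_sup, L.phi_inf, L.phi_inf, L.phi_phi, L.phi_phi, L.phi_phibar, L.phi_phibar]

lemma exists_isCompl_finsetInf {ι : Type*} (s : Finset ι) (f : ι → A)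
    (h : ∀ i ∈ s, ∃ g, IsCompl (f i) g) : ∃ e, IsCompl (s.inf f) e := by
  classical
  induction s using Finset.cons_induction with
  | empty => exact ⟨⊥, by simpa using isCompl_top_bot⟩
  | cons i s hi ih =>
    obtain ⟨g, hg⟩ := h i (Finset.mem_cons_self _ _)
    obtain ⟨e, he⟩ := ih fun j hj => h j (Finset.mem_cons_of_mem hj)
    exact ⟨g ⊔ e, by rw [Finset.inf_cons]; exact hg.inf_sup he⟩

lemma LMAlg.dd_compl [Fintype I] (a b : A) : ∃ e, IsCompl (L.dd a b) e := by
  refine exists_isCompl_finsetInf _ _ fun i _ => ?_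
  exact ⟨_, IsCompl.sup_inf ((L.isCompl_phi i a).inf_sup (L.isCompl_phi i b))
    (((L.isCompl_phi i a).symm).inf_sup ((L.isCompl_phi i b).symm))⟩

lemma inf_dd_helper {p pb q qb m : A} (hp : p ⊓ pb = ⊥)
    (hm : m ≤ (p ⊓ q) ⊔ (pb ⊓ qb)) : p ⊓ m = p ⊓ q ⊓ m := by
  have h1 : ((p ⊓ q) ⊔ (pb ⊓ qb)) ⊓ m = m := inf_eq_right.mpr hm
  calc p ⊓ m = p ⊓ (((p ⊓ q) ⊔ (pb ⊓ qb)) ⊓ m) := by rw [h1]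
    _ = (p ⊓ ((p ⊓ q) ⊔ (pb ⊓ qb))) ⊓ m := by rw [inf_assoc]
    _ = ((p ⊓ (p ⊓ q)) ⊔ (p ⊓ (pb ⊓ qb))) ⊓ m := by rw [inf_sup_left]
    _ = p ⊓ q ⊓ m := by rw [← inf_assoc p p q, inf_idem, ← inf_assoc p pb qb, hp,
          bot_inf_eq, sup_bot_eq]

lemma LMAlg.inf_dd_eq [Fintype I] (a b : A) : a ⊓ L.dd a b = b ⊓ L.dd a b := by
  refine L.determined _ _ fun k => ?_
  rw [L.phi_inf, L.phi_inf, L.phi_dd]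
  have hle : L.dd a b ≤ (L.phi k a ⊓ L.phi k b) ⊔ (L.phibar k a ⊓ L.phibar k b) :=
    Finset.inf_le (Finset.mem_univ k)
  have h1 := inf_dd_helper (L.inf_phibar k a) hle
  have hle' : L.dd a b ≤ (L.phi k b ⊓ L.phi k a) ⊔ (L.phibar k b ⊓ L.phibar k a) := by
    rwa [inf_comm (L.phi k b), inf_comm (L.phibar k b)]
  have h2 := inf_dd_helper (L.inf_phibar k b) hle'
  rw [h1, h2, inf_comm (L.phi k b) (L.phi k a)]

lemma congr_inf_top {r : A → A → Prop} (hr : IsLMCongr L r) {ι : Type*} (s : Finset ι)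
    (f : ι → A) (h : ∀ i ∈ s, r (f i) ⊤) : r (s.inf f) ⊤ := by
  classical
  induction s using Finset.cons_induction with
  | empty => simpa using hr.refl ⊤
  | cons i s hi ih =>
    have h3 := hr.inf_congr (h i (Finset.mem_cons_self _ _))
      (ih fun j hj => h j (Finset.mem_cons_of_mem hj))
    rw [inf_idem] at h3
    simpa [Finset.inf_cons] using h3

lemma LMAlg.r_dd_top [Fintype I] {r : A → A → Prop} (hr : IsLMCongr L r) {x y : A}
    (h : r x y) : r (L.dd x y) ⊤ := by
  refine congr_inf_top L hr _ _ fun i _ => ?_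
  have h1 := hr.inf_congr (hr.phi_congr i h) (hr.refl (L.phi i y))
  have h2 := hr.inf_congr (hr.phibar_congr i h) (hr.refl (L.phibar i y))
  have h3 := hr.sup_congr h1 h2
  rwa [inf_idem, inf_idem, L.sup_phibar] at h3

lemma congr_of_top {r : A → A → Prop} (hr : IsLMCongr L r) {c x y : A} (hc : r c ⊤)
    (h : x ⊓ c = y ⊓ c) : r x y := by
  have hx := hr.inf_congr (hr.refl x) hc
  have hy := hr.inf_congr (hr.refl y) hc
  rw [inf_top_eq] at hx hy
  rw [h] at hx
  exact hr.trans (hr.symm hx) hy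

/-- The congruence `x ⊓ c = y ⊓ c`. -/
def thetaC (c : A) : A → A → Prop := fun x y => x ⊓ c = y ⊓ c

lemma thetaC_phi {c : A} (hc : ∀ i, L.phi i c = c) (i : I) {x y : A}
    (h : thetaC c x y) : thetaC c (L.phi i x) (L.phi i y) := by
  have := congrArg (L.phi i) h
  rwa [L.phi_inf, L.phi_inf, hc] at this

lemma thetaC_isLMCongr {c : A} (hc : ∀ i, L.phi i c = c) : IsLMCongr L (thetaC c) where
  refl _ := rfl
  symm h := h.symm
  trans h1 h2 := h1.trans h2
  sup_congr {x y u v} h1 h2 := by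
    show (x ⊔ u) ⊓ c = (y ⊔ v) ⊓ c
    rw [inf_sup_right, inf_sup_right, h1, h2]
  inf_congr {x y u v} h1 h2 := by
    show x ⊓ u ⊓ c = y ⊓ v ⊓ c
    rw [inf_inf_distrib_right, h1, h2, ← inf_inf_distrib_right]
  phi_congr := fun i {x y} h => thetaC_phi L hc i h
  phibar_congr := fun i {x y} h =>
    relcompl (L.isCompl_phi i x) (L.isCompl_phi i y) (thetaC_phi L hc i h)

lemma thetaC_principalOn [Fintype I] (a b : A) :
    IsPrincipalLMCongrOn L (thetaC (L.dd a b)) a b :=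
  ⟨thetaC_isLMCongr L (fun i => L.phi_dd i a b), L.inf_dd_eq a b,
   fun s hs hsab x y hxy => congr_of_top L hs (L.r_dd_top hs hsab) hxy⟩

end AuxLM


/-- on an LM_n-algebra, an LM_n-congruence is Boolean iff it is
principal. -/
theorem stmt19 {A : Type*} [DistribLattice A] [BoundedOrder A] (n : ℕ) (hn : 2 ≤ n)
    (L : LMAlg (Fin (n - 1)) A) (r : A → A → Prop) (hr : IsLMCongr L r) :
    IsBooleanLMCongr L r ↔ IsPrincipalLMCongr L r := by
  constructor
  · -- Boolean → principal
    rintro ⟨-, s, hs, hDelta, hJoin⟩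
    -- the auxiliary congruence t
    set t : A → A → Prop := fun x y => ∃ c c', (∀ i, L.phi i c = c) ∧ (∀ i, L.phi i c' = c') ∧
      r c ⊤ ∧ s c' ⊤ ∧ x ⊓ (c ⊓ c') = y ⊓ (c ⊓ c') with ht_def
    have ht : IsLMCongr L t := by
      constructor
      · intro x
        exact ⟨⊤, ⊤, fun i => L.phi_top i, fun i => L.phi_top i, hr.refl ⊤, hs.refl ⊤, rfl⟩
      · rintro x y ⟨c, c', h1, h2, h3, h4, h5⟩
        exact ⟨c, c', h1, h2, h3, h4, h5.symm⟩
      · rintro x y z ⟨c1, c1', h11, h12, h13, h14, h15⟩ ⟨c2, c2', h21, h22, h23, h24, h25⟩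
        refine ⟨c1 ⊓ c2, c1' ⊓ c2', fun i => by rw [L.phi_inf, h11, h21],
          fun i => by rw [L.phi_inf, h12, h22], ?_, ?_, ?_⟩
        · have := hr.inf_congr h13 h23; rwa [inf_idem] at this
        · have := hs.inf_congr h14 h24; rwa [inf_idem] at this
        · have e1 : (c1 ⊓ c2) ⊓ (c1' ⊓ c2') = (c1 ⊓ c1') ⊓ (c2 ⊓ c2') := inf_inf_inf_comm ..
          rw [e1, ← inf_assoc, h15, inf_assoc, inf_comm (c1 ⊓ c1') (c2 ⊓ c2'), ← inf_assoc,
            h25, inf_assoc, inf_comm (c2 ⊓ c2') (c1 ⊓ c1')]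
      · rintro x y u v ⟨c1, c1', h11, h12, h13, h14, h15⟩ ⟨c2, c2', h21, h22, h23, h24, h25⟩
        refine ⟨c1 ⊓ c2, c1' ⊓ c2', fun i => by rw [L.phi_inf, h11, h21],
          fun i => by rw [L.phi_inf, h12, h22], ?_, ?_, ?_⟩
        · have := hr.inf_congr h13 h23; rwa [inf_idem] at this
        · have := hs.inf_congr h14 h24; rwa [inf_idem] at this
        · have e1 : (c1 ⊓ c2) ⊓ (c1' ⊓ c2') = (c1 ⊓ c1') ⊓ (c2 ⊓ c2') := inf_inf_inf_comm ..
          have e2 : x ⊓ ((c1 ⊓ c1') ⊓ (c2 ⊓ c2')) = y ⊓ ((c1 ⊓ c1') ⊓ (c2 ⊓ c2')) := by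
            rw [← inf_assoc, h15, inf_assoc]
          have e3 : u ⊓ ((c1 ⊓ c1') ⊓ (c2 ⊓ c2')) = v ⊓ ((c1 ⊓ c1') ⊓ (c2 ⊓ c2')) := by
            rw [inf_comm (c1 ⊓ c1') (c2 ⊓ c2'), ← inf_assoc, h25, inf_assoc,
              inf_comm (c2 ⊓ c2') (c1 ⊓ c1')]
          rw [e1, inf_sup_right, inf_sup_right, e2, e3]
      · rintro x y u v ⟨c1, c1', h11, h12, h13, h14, h15⟩ ⟨c2, c2', h21, h22, h23, h24, h25⟩
        refine ⟨c1 ⊓ c2, c1' ⊓ c2', fun i => by rw [L.phi_inf, h11, h21],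
          fun i => by rw [L.phi_inf, h12, h22], ?_, ?_, ?_⟩
        · have := hr.inf_congr h13 h23; rwa [inf_idem] at this
        · have := hs.inf_congr h14 h24; rwa [inf_idem] at this
        · have e1 : (c1 ⊓ c2) ⊓ (c1' ⊓ c2') = (c1 ⊓ c1') ⊓ (c2 ⊓ c2') := inf_inf_inf_comm ..
          have e2 : x ⊓ ((c1 ⊓ c1') ⊓ (c2 ⊓ c2')) = y ⊓ ((c1 ⊓ c1') ⊓ (c2 ⊓ c2')) := by
            rw [← inf_assoc, h15, inf_assoc]
          have e3 : u ⊓ ((c1 ⊓ c1') ⊓ (c2 ⊓ c2')) = v ⊓ ((c1 ⊓ c1') ⊓ (c2 ⊓ c2')) := by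
            rw [inf_comm (c1 ⊓ c1') (c2 ⊓ c2'), ← inf_assoc, h25, inf_assoc,
              inf_comm (c2 ⊓ c2') (c1 ⊓ c1')]
          rw [e1, inf_inf_distrib_right, e2, e3, ← inf_inf_distrib_right]
      · rintro i x y ⟨c, c', h1, h2, h3, h4, h5⟩
        refine ⟨c, c', h1, h2, h3, h4, ?_⟩
        have := congrArg (L.phi i) h5
        rwa [L.phi_inf, L.phi_inf, L.phi_inf, L.phi_inf, h1, h2] at this
      · rintro i x y ⟨c, c', h1, h2, h3, h4, h5⟩
        refine ⟨c, c', h1, h2, h3, h4, ?_⟩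
        have hphi : L.phi i x ⊓ (c ⊓ c') = L.phi i y ⊓ (c ⊓ c') := by
          have := congrArg (L.phi i) h5
          rwa [L.phi_inf, L.phi_inf, L.phi_inf, L.phi_inf, h1, h2] at this
        exact relcompl (L.isCompl_phi i x) (L.isCompl_phi i y) hphi
    have htr : ∀ x y, r x y → t x y := by
      intro x y hxy
      exact ⟨L.dd x y, ⊤, fun i => L.phi_dd i x y, fun i => L.phi_top i,
        L.r_dd_top hr hxy, hs.refl ⊤, by rw [inf_top_eq, L.inf_dd_eq x y]⟩
    have hts : ∀ x y, s x y → t x y := by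
      intro x y hxy
      exact ⟨⊤, L.dd x y, fun i => L.phi_top i, fun i => L.phi_dd i x y,
        hr.refl ⊤, L.r_dd_top hs hxy, by rw [top_inf_eq, L.inf_dd_eq x y]⟩
    obtain ⟨c, c', hc, hc', hcT, hc'T, hbot⟩ := hJoin t ht htr hts ⊥ ⊤
    rw [bot_inf_eq, top_inf_eq] at hbot
    have hcc' : c ⊓ c' = ⊥ := hbot.symm
    refine ⟨c, ⊤, hr, hcT, ?_⟩
    intro u hu hucT x y hxy
    obtain ⟨e, he⟩ := L.dd_compl x y
    have hdT : r (L.dd x y) ⊤ := L.r_dd_top hr hxy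
    -- r (c ⊓ e) ⊥
    have hre : r (c ⊓ e) ⊥ := by
      have h1 := hr.inf_congr (hr.refl (c ⊓ e)) hdT
      rw [inf_top_eq, inf_assoc, inf_comm e (L.dd x y), he.inf_eq_bot, inf_bot_eq] at h1
      exact hr.symm h1
    -- s (c ⊓ e) ⊥
    have hse : s (c ⊓ e) ⊥ := by
      have h1 := hs.inf_congr (hs.refl (c ⊓ e)) hc'T
      rw [inf_top_eq, inf_assoc, inf_comm e c', ← inf_assoc, hcc', bot_inf_eq] at h1
      exact hs.symm h1
    have hce : c ⊓ e = ⊥ := (hDelta (c ⊓ e) ⊥).mp ⟨hre, hse⟩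
    have hcd : c ≤ L.dd x y := by
      have h1 : c = c ⊓ L.dd x y := by
        calc c = c ⊓ ⊤ := (inf_top_eq c).symm
        _ = c ⊓ (L.dd x y ⊔ e) := by rw [he.sup_eq_top]
        _ = (c ⊓ L.dd x y) ⊔ (c ⊓ e) := inf_sup_left ..
        _ = c ⊓ L.dd x y := by rw [hce, sup_bot_eq]
      exact h1 ▸ inf_le_right
    have hud : u (L.dd x y) ⊤ := by
      have h1 := hu.sup_congr (hu.refl (L.dd x y)) hucT
      rwa [sup_eq_left.mpr hcd, sup_top_eq] at h1
    exact congr_of_top L hu hud (L.inf_dd_eq x y)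
  · -- principal → Boolean
    rintro ⟨a, b, hpr, hpab, hpmin⟩
    have hθ := thetaC_principalOn L a b
    have hEq : ∀ x y, r x y ↔ thetaC (L.dd a b) x y := by
      intro x y
      constructor
      · exact fun h => hpmin _ hθ.1 hθ.2.1 x y h
      · exact fun h => hθ.2.2 r hr hpab x y h
    obtain ⟨e, he⟩ := L.dd_compl a b
    have he_inv : ∀ i, L.phi i e = e := L.phi_of_compl (fun i => L.phi_dd i a b) he
    refine ⟨hr, thetaC e, thetaC_isLMCongr L he_inv, ?_, ?_⟩
    · intro x y
      constructor
      · rintro ⟨h1, h2⟩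
        have h1' : x ⊓ L.dd a b = y ⊓ L.dd a b := (hEq x y).mp h1
        calc x = x ⊓ ⊤ := (inf_top_eq x).symm
        _ = x ⊓ (L.dd a b ⊔ e) := by rw [he.sup_eq_top]
        _ = (x ⊓ L.dd a b) ⊔ (x ⊓ e) := inf_sup_left ..
        _ = (y ⊓ L.dd a b) ⊔ (y ⊓ e) := by rw [h1', h2]
        _ = y ⊓ (L.dd a b ⊔ e) := (inf_sup_left ..).symm
        _ = y := by rw [he.sup_eq_top, inf_top_eq]
      · rintro rfl
        exact ⟨hr.refl x, rfl⟩
    · intro u hu hur hus x y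
      have h1 : u (L.dd a b) ⊥ := by
        refine hus _ _ ?_
        show L.dd a b ⊓ e = ⊥ ⊓ e
        rw [he.inf_eq_bot, bot_inf_eq]
      have h2 : u e ⊥ := by
        refine hur _ _ ((hEq e ⊥).mpr ?_)
        show e ⊓ L.dd a b = ⊥ ⊓ L.dd a b
        rw [inf_comm, he.inf_eq_bot, bot_inf_eq]
      have hT : u ⊤ ⊥ := by
        have h3 := hu.sup_congr h1 h2
        rwa [he.sup_eq_top, sup_idem] at h3
      have hx : u x ⊥ := by
        have h4 := hu.inf_congr (hu.refl x) hT
        rwa [inf_top_eq, inf_bot_eq] at h4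
      have hy : u y ⊥ := by
        have h4 := hu.inf_congr (hu.refl y) hT
        rwa [inf_top_eq, inf_bot_eq] at h4
      exact hu.trans hx (hu.symm hy)
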